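/- arXiv:1306.2185 — 5 statements merged into one kernel-verified Lean document; each statement's English description precedes it below -/
import Mathlib

section
/- Let v : ι → V be a family of vectors over a linearly ordered index type that are pairwise orthogonal (polar Q (v i) (v j) = 0 for i ≠ j), and let J, K be finite index sets with |J| = μ, |K| = ν and β = |J ∩ K|. Then the corresponding basis blades satisfy e_J · e_K = (−1)^{μν − β} · e_K · e_J. In particular, any two basis blades generated from a common orthogonal family either commute or anticommute. -/
noncomputable section
open CliffordAlgebra

private lemma aux_pull {A : Type*} [Ring A] (n : ℕ) (a b : A) :
    a * ((-1 : A) ^ n * b) = (-1 : A) ^ n * (a * b) := by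
  rw [← mul_assoc, ← ((Commute.neg_one_left a).pow_left n).eq, mul_assoc]

private lemma aux_sq {A : Type*} [Ring A] (n : ℕ) :
    ((-1 : A) ^ n) * ((-1 : A) ^ n) = 1 := by
  rw [← pow_add]; exact Even.neg_one_pow ⟨n, rfl⟩

section
variable {V : Type*} [AddCommGroup V] [Module ℝ V] (Q : QuadraticForm ℝ V)
    {ι' : Type*} [LinearOrder ι'] (v : ι' → V)
    (hanti : ∀ i j : ι', i ≠ j → ι Q (v i) * ι Q (v j) = -(ι Q (v j) * ι Q (v i)))

include hanti in
private lemma L1 (j : ι') (l : List ι') :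
    ι Q (v j) * (l.map (fun i => ι Q (v i))).prod =
      (-1 : CliffordAlgebra Q) ^ ((l.filter (· ≠ j)).length) *
        ((l.map (fun i => ι Q (v i))).prod * ι Q (v j)) := by
  induction l with
  | nil => simp
  | cons i t ih =>
    simp only [List.map_cons, List.prod_cons]
    by_cases h : i = j
    · subst h
      rw [List.filter_cons_of_neg (by simp)]
      conv_lhs => rw [ih]
      rw [aux_pull]
      simp only [mul_assoc]
    · rw [List.filter_cons_of_pos (by simp [h]), List.length_cons, pow_succ,
        ← mul_assoc, hanti j i (Ne.symm h), neg_mul, mul_assoc, ih, aux_pull]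
      simp only [mul_assoc, mul_neg, neg_mul, mul_one, neg_neg, mul_neg_one]

include hanti in
private lemma L1' (j : ι') (l : List ι') :
    (l.map (fun i => ι Q (v i))).prod * ι Q (v j) =
      (-1 : CliffordAlgebra Q) ^ ((l.filter (· ≠ j)).length) *
        (ι Q (v j) * (l.map (fun i => ι Q (v i))).prod) := by
  have h := L1 Q v hanti j l
  calc (l.map (fun i => ι Q (v i))).prod * ι Q (v j)
      = ((-1 : CliffordAlgebra Q) ^ ((l.filter (· ≠ j)).length) *
          (-1 : CliffordAlgebra Q) ^ ((l.filter (· ≠ j)).length)) *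
          ((l.map (fun i => ι Q (v i))).prod * ι Q (v j)) := by rw [aux_sq, one_mul]
    _ = _ := by rw [mul_assoc, ← h]

include hanti in
private lemma L2 (l2 l1 : List ι') :
    (l1.map (fun i => ι Q (v i))).prod * (l2.map (fun i => ι Q (v i))).prod =
      (-1 : CliffordAlgebra Q) ^ ((l2.map (fun j => (l1.filter (· ≠ j)).length)).sum) *
        ((l2.map (fun i => ι Q (v i))).prod * (l1.map (fun i => ι Q (v i))).prod) := by
  induction l2 with
  | nil => simp
  | cons j t ih =>
    simp only [List.map_cons, List.prod_cons, List.sum_cons, pow_add]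
    rw [← mul_assoc, L1' Q v hanti j l1, mul_assoc, mul_assoc, ih, aux_pull, aux_pull,
      ← mul_assoc, ← pow_add, Nat.add_comm, pow_add]
    simp only [mul_assoc]
end

/-- The basis blade `e_J`: the product `∏_{i ∈ J} ι(v i)` with factors taken in
increasing order of the index, `e_∅ = 1`. -/
def basisBlade {V : Type*} [AddCommGroup V] [Module ℝ V] (Q : QuadraticForm ℝ V)
    {ι' : Type*} [LinearOrder ι'] (v : ι' → V) (J : Finset ι') : CliffordAlgebra Q :=
  ((J.sort (· ≤ ·)).map (fun i => ι Q (v i))).prod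

/-- Basis blades generated from a common family of pairwise orthogonal vectors satisfy
`e_J e_K = (−1)^{μν − β} e_K e_J`, and in particular they either commute or anticommute. -/
theorem basisBlade_mul_comm_sign {V : Type*} [AddCommGroup V] [Module ℝ V]
    (Q : QuadraticForm ℝ V) {ι' : Type*} [LinearOrder ι'] (v : ι' → V)
    (hv : ∀ i j : ι', i ≠ j → QuadraticMap.polar Q (v i) (v j) = 0)
    (J K : Finset ι') (μ ν β : ℕ)
    (hμ : J.card = μ) (hν : K.card = ν) (hβ : (J ∩ K).card = β) :
    basisBlade Q v J * basisBlade Q v K =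
      (-1 : CliffordAlgebra Q) ^ (μ * ν - β) * (basisBlade Q v K * basisBlade Q v J) ∧
    (basisBlade Q v J * basisBlade Q v K = basisBlade Q v K * basisBlade Q v J ∨
      basisBlade Q v J * basisBlade Q v K = -(basisBlade Q v K * basisBlade Q v J)) := by
  classical
  have hanti : ∀ i j : ι', i ≠ j → ι Q (v i) * ι Q (v j) = -(ι Q (v j) * ι Q (v i)) := by
    intro i j hij
    have h := ι_mul_ι_comm (Q := Q) (v i) (v j)
    rw [hv i j hij] at h
    simpa using h
  set l1 := J.sort (· ≤ ·) with hl1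
  set l2 := K.sort (· ≤ ·) with hl2
  have key := L2 Q v hanti l2 l1
  have hg : ∀ j : ι', (l1.filter (· ≠ j)).length = μ - (if j ∈ J then 1 else 0) := by
    intro j
    have hnd : l1.Nodup := Finset.sort_nodup _ _
    have hlen : l1.length = μ := by rw [hl1, Finset.length_sort, hμ]
    have hcount : l1.count j = if j ∈ J then 1 else 0 := by
      by_cases hj : j ∈ J
      · have hm : j ∈ l1 := by rw [hl1]; exact (Finset.mem_sort _).2 hj
        rw [if_pos hj]; exact List.count_eq_one_of_mem hnd hm
      · have hm : j ∉ l1 := by rw [hl1]; simp [Finset.mem_sort, hj]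
        rw [if_neg hj]; exact List.count_eq_zero.2 hm
    have h2 := List.length_eq_length_filter_add (l := l1) (fun x => decide (x ≠ j))
    have h3 : (l1.filter (fun x => !decide (x ≠ j))).length = l1.count j := by
      have : (l1.filter (fun x => !decide (x ≠ j))) = l1.filter (fun x => x == j) := by
        apply List.filter_congr
        intro x _
        by_cases hxj : x = j <;> simp [hxj]
      rw [this, List.count]
      rw [List.countP_eq_length_filter]
    omega
  have hsum1 : ((l2.map (fun j => (l1.filter (· ≠ j)).length)).sum) =
      ∑ j ∈ K, (μ - (if j ∈ J then 1 else 0)) := by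
    have hnd2 : l2.Nodup := Finset.sort_nodup _ _
    have hK : l2.toFinset = K := Finset.sort_toFinset _ _
    rw [← hK, List.sum_toFinset _ hnd2]
    exact congrArg List.sum (List.map_congr_left (fun j _ => hg j))
  have hβ' : (∑ j ∈ K, (if j ∈ J then 1 else 0)) = β := by
    rw [← Finset.sum_filter, Finset.sum_const, smul_eq_mul, mul_one,
      Finset.filter_mem_eq_inter, Finset.inter_comm, hβ]
  have hle : ∀ j ∈ K, (if j ∈ J then 1 else 0) ≤ μ := by
    intro j _
    by_cases hj : j ∈ J
    · simpa [hj, ← hμ] using Finset.card_pos.mpr ⟨j, hj⟩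
    · simp [hj]
  have hadd : (∑ j ∈ K, (μ - (if j ∈ J then 1 else 0))) + β = μ * ν := by
    rw [← hβ', ← Finset.sum_add_distrib,
      Finset.sum_congr rfl (fun j hj => Nat.sub_add_cancel (hle j hj)),
      Finset.sum_const, smul_eq_mul, hν, Nat.mul_comm]
  have hexp : ((l2.map (fun j => (l1.filter (· ≠ j)).length)).sum) = μ * ν - β := by
    rw [hsum1]; omega
  rw [hexp] at key
  have hmain : basisBlade Q v J * basisBlade Q v K =
      (-1 : CliffordAlgebra Q) ^ (μ * ν - β) * (basisBlade Q v K * basisBlade Q v J) := key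
  refine ⟨hmain, ?_⟩
  rcases Nat.even_or_odd (μ * ν - β) with he | ho
  · left; rw [hmain, he.neg_one_pow, one_mul]
  · right; rw [hmain, ho.neg_one_pow, neg_one_mul]
end
end

section
/- Let B_1,…,B_d ∈ 𝔸 be invertible elements such that each B_k² is a nonzero real multiple of 1 and such that for all k, l either B_k B_l = B_l B_k or B_k B_l = −B_l B_k. Then for every A ∈ 𝔸 and every multi-index j ∈ {0,1}^d, the iterated decomposition A_{c^j(→B)} is independent of the order of the list: for every permutation σ of {1,…,d}, ((A_{c^{j_1}(B_1)})_{c^{j_2}(B_2)}⋯)_{c^{j_d}(B_d)} = ((A_{c^{j_{σ(1)}}(B_{σ(1)})})_{c^{j_{σ(2)}}(B_{σ(2)})}⋯)_{c^{j_{σ(d)}}(B_{σ(d)})}. -/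
/-!
Conjugating by `D` and then by `C` is conjugation by `D * C`, and conjugation by `x` and by `-x`
agree; so for `C * D = ±D * C` the two conjugations commute. Each `cPart` is a linear combination
of the identity and a conjugation, hence the `cPart` operations commute pairwise, and a fold of
pairwise commuting operations does not depend on the order of the list.
-/

noncomputable section

variable {𝔸 : Type*}

/-- The commutative (`s = 0`) and anticommutative (`s = 1`) part of `A` with respect to an
invertible element `B`: `A_{c^s(B)} = ½(A + (−1)^s B⁻¹AB)`. -/
def cPart [Ring 𝔸] [Algebra ℝ 𝔸] (B : 𝔸) (s : Fin 2) (A : 𝔸) : 𝔸 :=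
  (2 : ℝ)⁻¹ • (A + (-1 : 𝔸) ^ (s : ℕ) * (Ring.inverse B * A * B))

/-- The forward iterated decomposition `A_{c^j(→B)}`, applying the first list entry first. -/
def cFwd [Ring 𝔸] [Algebra ℝ 𝔸] (L : List (𝔸 × Fin 2)) (A : 𝔸) : 𝔸 :=
  L.foldl (fun acc p => cPart p.1 p.2 acc) A

theorem inverse_conj_comm_of_mul_eq_or_eq_neg [Ring 𝔸] {C D : 𝔸} (hC : IsUnit C)
    (hD : IsUnit D) (h : C * D = D * C ∨ C * D = -(D * C)) (A : 𝔸) :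
    Ring.inverse C * (Ring.inverse D * A * D) * C
      = Ring.inverse D * (Ring.inverse C * A * C) * D := by
  obtain ⟨u, rfl⟩ := hC
  obtain ⟨v, rfl⟩ := hD
  have conj_neg : ∀ w : 𝔸ˣ, ↑(-w)⁻¹ * A * ↑(-w) = ↑w⁻¹ * A * ↑w := by
    intro w; simp [inv_neg]
  suffices ↑(v * u)⁻¹ * A * ↑(v * u) = ↑(u * v)⁻¹ * A * ↑(u * v) by
    simpa [Ring.inverse_unit, mul_assoc] using this
  rcases h with h | h
  · rw [show u * v = v * u from Units.ext h]
  · rw [show u * v = -(v * u) from Units.ext (by simpa using h), conj_neg]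

theorem cPart_eq_smul [Ring 𝔸] [Algebra ℝ 𝔸] (B : 𝔸) (s : Fin 2) (A : 𝔸) :
    cPart B s A = (2 : ℝ)⁻¹ • (A + (-1 : ℝ) ^ (s : ℕ) • (Ring.inverse B * A * B)) := by
  rw [cPart, Algebra.smul_def ((-1 : ℝ) ^ _), map_pow, map_neg, map_one]

theorem cPart_comm [Ring 𝔸] [Algebra ℝ 𝔸] {C D : 𝔸} (hC : IsUnit C) (hD : IsUnit D)
    (h : C * D = D * C ∨ C * D = -(D * C)) (s t : Fin 2) (A : 𝔸) :
    cPart C s (cPart D t A) = cPart D t (cPart C s A) := by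
  have hconj := inverse_conj_comm_of_mul_eq_or_eq_neg hC hD h A
  simp only [cPart_eq_smul, mul_add, add_mul, smul_mul_assoc, mul_smul_comm, hconj]
  module

theorem cFwd_eq_of_perm [Ring 𝔸] [Algebra ℝ 𝔸] {L L' : List (𝔸 × Fin 2)} (hL : L.Perm L')
    (hU : ∀ p ∈ L, IsUnit p.1)
    (hco : ∀ p ∈ L, ∀ q ∈ L, p.1 * q.1 = q.1 * p.1 ∨ p.1 * q.1 = -(q.1 * p.1)) (A : 𝔸) :
    cFwd L A = cFwd L' A :=
  hL.foldl_eq' (fun p hp q hq X => cPart_comm (hU q hq) (hU p hp) (hco q hq p hp) _ _ X) A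

theorem cFwd_perm_invariant_general [Ring 𝔸] [Algebra ℝ 𝔸]
    {d : ℕ} (B : Fin d → 𝔸) (hU : ∀ k, IsUnit (B k))
    (hco : ∀ k l, B k * B l = B l * B k ∨ B k * B l = -(B l * B k))
    (A : 𝔸) (j : Fin d → Fin 2) (σ : Equiv.Perm (Fin d)) :
    cFwd (List.ofFn (fun l => (B l, j l))) A =
      cFwd (List.ofFn (fun l => (B (σ l), j (σ l)))) A := by
  refine cFwd_eq_of_perm (σ.ofFn_comp_perm _).symm ?_ ?_ A
  · simpa [List.forall_mem_ofFn_iff] using hU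
  · simpa [List.forall_mem_ofFn_iff] using hco

/-- For invertible elements `B₁,…,B_d` with real square and mutually coorthogonal
(`B_k B_l = ±B_l B_k`), the iterated decomposition `A_{c^j(→B)}` is independent of the
order of the list. -/
theorem cFwd_perm_invariant [Ring 𝔸] [Algebra ℝ 𝔸]
    {d : ℕ} (B : Fin d → 𝔸) (hU : ∀ k, IsUnit (B k))
    (hsq : ∀ k, ∃ r : ℝ, r ≠ 0 ∧ B k ^ 2 = r • (1 : 𝔸))
    (hco : ∀ k l, B k * B l = B l * B k ∨ B k * B l = -(B l * B k))
    (A : 𝔸) (j : Fin d → Fin 2) (σ : Equiv.Perm (Fin d)) :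
    cFwd (List.ofFn (fun l => (B l, j l))) A =
      cFwd (List.ofFn (fun l => (B (σ l), j (σ l)))) A :=
  cFwd_perm_invariant_general B hU hco A j σ
end
end

section
/- Let B_1,…,B_d ∈ 𝔸 be invertible elements such that each B_k² is a nonzero real multiple of 1 and such that for all k, l either B_k B_l = B_l B_k or B_k B_l = −B_l B_k. Then for every A ∈ 𝔸 and every multi-index j ∈ {0,1}^d the two iterated decompositions coincide: A_{c^j(→B)} = A_{c^j(←B)}. -/
noncomputable section

variable {𝔸 : Type*}

/-- The backward iterated decomposition `A_{c^j(←B)}`, applying the last list entry first. -/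
def cBwd [Ring 𝔸] [Algebra ℝ 𝔸] (L : List (𝔸 × Fin 2)) (A : 𝔸) : 𝔸 :=
  L.foldr (fun p acc => cPart p.1 p.2 acc) A

/-! Each `cPart B s` is the linear map `½(1 + (−1)^s τ_B)` with `τ_B X = B⁻¹XB`. Since
`τ_B τ_C = τ_{CB}` and `CB = ±BC` gives `τ_{CB} = τ_{BC}`, these maps pairwise commute, and
composing pairwise commuting maps in either order gives the same result. -/

theorem List.foldl_flip_eq_foldr_of_commute {α β : Type*} (f : α → β → β) (l : List α)
    (h : ∀ x ∈ l, ∀ y ∈ l, ∀ z, f y (f x z) = f x (f y z)) (b : β) :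
    l.foldl (fun acc x => f x acc) b = l.foldr f b := by
  rw [List.foldl_eq_foldr_reverse]
  exact (List.reverse_perm l).foldr_eq' (by simpa only [List.mem_reverse] using h) b

theorem Ring.inverse_neg {R : Type*} [Ring R] (a : R) : Ring.inverse (-a) = -Ring.inverse a := by
  by_cases h : IsUnit a
  · lift a to Rˣ using h
    rw [← Units.val_neg, Ring.inverse_unit, Ring.inverse_unit, inv_neg, Units.val_neg]
  · rw [Ring.inverse_non_unit a h, Ring.inverse_non_unit (-a) (by rwa [IsUnit.neg_iff]), neg_zero]

section Conjugation

variable {R : Type*} [Ring R]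

theorem inverse_mul_inverse_mul_mul_mul {B C : R} (hB : IsUnit B) (X : R) :
    Ring.inverse B * (Ring.inverse C * X * C) * B = Ring.inverse (C * B) * X * (C * B) := by
  rw [Ring.inverse_mul (Or.inr hB)]
  noncomm_ring

theorem inverse_neg_mul_mul_neg (D X : R) :
    Ring.inverse (-D) * X * -D = Ring.inverse D * X * D := by
  rw [Ring.inverse_neg, neg_mul, neg_mul, mul_neg, neg_neg]

theorem inverse_mul_inverse_mul_mul_mul_comm {B C : R} (hB : IsUnit B) (hC : IsUnit C)
    (h : B * C = C * B ∨ B * C = -(C * B)) (X : R) :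
    Ring.inverse B * (Ring.inverse C * X * C) * B = Ring.inverse C * (Ring.inverse B * X * B) * C := by
  rw [inverse_mul_inverse_mul_mul_mul hB, inverse_mul_inverse_mul_mul_mul hC]
  rcases h with h | h <;> rw [h]
  exact (inverse_neg_mul_mul_neg _ X).symm

end Conjugation

section Decomposition

variable [Ring 𝔸] [Algebra ℝ 𝔸]

def conjEnd (B : 𝔸) : Module.End ℝ 𝔸 :=
  LinearMap.mulRight ℝ B ∘ₗ LinearMap.mulLeft ℝ (Ring.inverse B)

theorem conjEnd_commute {B C : 𝔸} (hB : IsUnit B) (hC : IsUnit C)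
    (h : B * C = C * B ∨ B * C = -(C * B)) : Commute (conjEnd B) (conjEnd C) :=
  LinearMap.ext (inverse_mul_inverse_mul_mul_mul_comm hB hC h)

theorem cPart_eq_conjEnd_apply (B : 𝔸) (s : Fin 2) (A : 𝔸) :
    cPart B s A = ((2 : ℝ)⁻¹ • (1 + (-1 : ℝ) ^ (s : ℕ) • conjEnd B)) A := by
  fin_cases s <;> simp [cPart, conjEnd, mul_assoc]

theorem cPart_cPart_comm {B C : 𝔸} (hB : IsUnit B) (hC : IsUnit C)
    (h : B * C = C * B ∨ B * C = -(C * B)) (s t : Fin 2) (A : 𝔸) :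
    cPart B s (cPart C t A) = cPart C t (cPart B s A) := by
  have hτ := conjEnd_commute hB hC h
  have hcomm : Commute ((2 : ℝ)⁻¹ • (1 + (-1 : ℝ) ^ (s : ℕ) • conjEnd B))
      ((2 : ℝ)⁻¹ • (1 + (-1 : ℝ) ^ (t : ℕ) • conjEnd C)) :=
    (((Commute.one_left _).add_left
      ((Commute.one_right _).add_right ((hτ.smul_left _).smul_right _))).smul_left _).smul_right _
  simp only [cPart_eq_conjEnd_apply]
  exact LinearMap.congr_fun hcomm.eq A

end Decomposition

theorem cFwd_eq_cBwd_general [Ring 𝔸] [Algebra ℝ 𝔸]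
    {d : ℕ} (B : Fin d → 𝔸) (hU : ∀ k, IsUnit (B k))
    (hco : ∀ k l, B k * B l = B l * B k ∨ B k * B l = -(B l * B k))
    (A : 𝔸) (j : Fin d → Fin 2) :
    cFwd (List.ofFn (fun l => (B l, j l))) A =
      cBwd (List.ofFn (fun l => (B l, j l))) A := by
  refine List.foldl_flip_eq_foldr_of_commute (fun (p : 𝔸 × Fin 2) acc => cPart p.1 p.2 acc) _ ?_ A
  simp only [List.mem_ofFn]
  rintro _ ⟨k, rfl⟩ _ ⟨l, rfl⟩ X
  exact cPart_cPart_comm (hU l) (hU k) (hco l k) (j l) (j k) X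

/-- For invertible elements `B₁,…,B_d` with real square and mutually coorthogonal
(`B_k B_l = ±B_l B_k`), the forward and backward iterated decompositions coincide:
`A_{c^j(→B)} = A_{c^j(←B)}`. -/
theorem cFwd_eq_cBwd [Ring 𝔸] [Algebra ℝ 𝔸]
    {d : ℕ} (B : Fin d → 𝔸) (hU : ∀ k, IsUnit (B k))
    (hsq : ∀ k, ∃ r : ℝ, r ≠ 0 ∧ B k ^ 2 = r • (1 : 𝔸))
    (hco : ∀ k l, B k * B l = B l * B k ∨ B k * B l = -(B l * B k))
    (A : 𝔸) (j : Fin d → Fin 2) :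
    cFwd (List.ofFn (fun l => (B l, j l))) A =
      cBwd (List.ofFn (fun l => (B l, j l))) A :=
  cFwd_eq_cBwd_general B hU hco A j
end
end

section
/- Let 𝔸 be a unital real Banach algebra and f_1,…,f_d ∈ 𝔸 invertible elements such that each f_l² is central in 𝔸. Then for every A ∈ 𝔸 the product of exponentials can be moved past A at the cost of sign flips on the decomposed parts: (∏_{l=1}^{d} exp(−f_l)) · A = Σ_{j∈{0,1}^d} A_{c^j(←F)} · ∏_{l=1}^{d} exp(−(−1)^{j_l} f_l), where F = (f_1,…,f_d) and all products over l are taken in increasing order of l. -/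
/-
If `f` is invertible and `f²` commutes with `A`, then `X ↦ f⁻¹Xf` is an involution on the span of
`A` and `f⁻¹Af`, so `A = A_{c⁰(f)} + A_{c¹(f)}` with the first part commuting with `f` and the
second anticommuting with it. Hence `exp(−f)` moves past the two parts as `exp(−f)` and `exp(f)`.
Moving the factors `exp(−f_l)` past `A` one at a time, starting with the innermost one, gives the
sum over `j`: centrality of the `f_l²` lets the argument be repeated on the parts already produced.
-/

noncomputable section

variable {𝔸 : Type*}

open NormedSpace

section Algebraic

variable [Ring 𝔸] [Algebra ℝ 𝔸]

theorem sum_cPart (B A : 𝔸) : ∑ s : Fin 2, cPart B s A = A := by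
  simp only [Fin.sum_univ_two, cPart, Fin.val_zero, Fin.val_one, pow_zero, pow_one, one_mul,
    neg_one_mul, ← smul_add]
  rw [add_add_add_comm, add_neg_cancel, add_zero, ← two_smul ℝ A, smul_smul]
  norm_num

theorem semiconjBy_cPart {f : 𝔸} (hf : IsUnit f) {A : 𝔸} (hA : Commute A (f ^ 2)) (s : Fin 2) :
    SemiconjBy (cPart f s A) ((-1 : ℝ) ^ (s : ℕ) • f) f := by
  have hfA : f * (Ring.inverse f * A * f) = A * f := by
    rw [← mul_assoc, ← mul_assoc, Ring.mul_inverse_cancel f hf, one_mul]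
  have hAf : Ring.inverse f * A * f * f = f * A := by
    rw [mul_assoc, mul_assoc, ← sq, hA.eq, ← mul_assoc, sq, ← mul_assoc,
      Ring.inverse_mul_cancel f hf, one_mul]
  unfold SemiconjBy cPart
  fin_cases s <;> simp [add_mul, mul_add, hfA, hAf, add_comm]

end Algebraic

section Exponential

variable [NormedRing 𝔸] [NormedAlgebra ℝ 𝔸] [CompleteSpace 𝔸]

theorem exp_neg_mul_cPart {f : 𝔸} (hf : IsUnit f) {A : 𝔸} (hA : Commute A (f ^ 2)) (s : Fin 2) :
    exp (-f) * cPart f s A = cPart f s A * exp (-((-1 : ℝ) ^ (s : ℕ) • f)) :=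
  -- `SemiconjBy.exp_right` is stated for normed `ℚ`-algebras.
  letI := NormedAlgebra.restrictScalars ℚ ℝ 𝔸
  (semiconjBy_cPart hf hA s).neg_right.exp_right.eq.symm

theorem exp_neg_mul_eq_sum_cPart {f : 𝔸} (hf : IsUnit f) {A : 𝔸} (hA : Commute A (f ^ 2)) :
    exp (-f) * A = ∑ s : Fin 2, cPart f s A * exp (-((-1 : ℝ) ^ (s : ℕ) • f)) := by
  conv_lhs => rw [← sum_cPart f A, Finset.mul_sum]
  exact Finset.sum_congr rfl fun s _ => exp_neg_mul_cPart hf hA s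

end Exponential

/-- A product of exponentials of invertible elements with central squares can be moved past a
multivector `A` at the cost of sign flips on the decomposed parts. -/
theorem prod_exp_mul_eq_sum_cBwd [NormedRing 𝔸] [NormedAlgebra ℝ 𝔸] [CompleteSpace 𝔸]
    {d : ℕ} (f : Fin d → 𝔸) (hU : ∀ l, IsUnit (f l))
    (hc : ∀ l, f l ^ 2 ∈ Set.center 𝔸) (A : 𝔸) :
    ((List.ofFn (fun l => NormedSpace.exp (-(f l)))).prod) * A =
      ∑ j : Fin d → Fin 2,
        cBwd (List.ofFn (fun l => (f l, j l))) A *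
          ((List.ofFn (fun l =>
            NormedSpace.exp (-((-1 : ℝ) ^ ((j l : ℕ)) • f l)))).prod) := by
  induction d generalizing A with
  | zero => simp [cBwd]
  | succ d ih =>
    rw [← (Fin.consEquiv fun _ => Fin 2).sum_comp, Fintype.sum_prod_type, Finset.sum_comm,
      List.ofFn_succ, List.prod_cons, mul_assoc,
      ih (fun l => f l.succ) (fun l => hU _) (fun l => hc _), Finset.mul_sum]
    refine Finset.sum_congr rfl fun j _ => ?_
    rw [← mul_assoc, exp_neg_mul_eq_sum_cPart (hU 0) (Semigroup.mem_center_iff.mp (hc 0) _),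
      Finset.sum_mul]
    refine Finset.sum_congr rfl fun s _ => ?_
    simp [List.ofFn_succ, cBwd, Fin.consEquiv, mul_assoc]
end
end

section
/- Let 𝔸 be a unital real Banach algebra and f_1,…,f_d ∈ 𝔸 invertible elements with f_l² = −r_l²·1 for reals r_l > 0. For each l let g_l : 𝔸 → 𝔸 be one of the following four functions: g_l(x) = exp(x), g_l(x) = cos(r_l)·1, g_l(x) = (sin(r_l)/r_l)·x, or g_l(x) = 0. Then for every A ∈ 𝔸: (∏_{l=1}^{d} g_l(−f_l)) · A = Σ_{j∈{0,1}^d} A_{c^j(←F)} · ∏_{l=1}^{d} g_l(−(−1)^{j_l} f_l), where F = (f_1,…,f_d) and all products over l are taken in increasing order of l. -/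
noncomputable section

variable {𝔸 : Type*}

/-!
Conjugation `A ↦ f⁻¹ A f` is an involution because `f²` is a scalar, so `A` splits as
`A_{c⁰(f)} + A_{c¹(f)}` with the first part commuting and the second anticommuting with `f`.
Each admissible `g` turns a semiconjugacy `x a = b x` into `x g(a) = g(b) x`; hence
`g(−f) A = A_{c⁰(f)} g(−f) + A_{c¹(f)} g(f)`. Pushing `A` through the product one factor at a
time and expanding yields the sum over `j ∈ {0,1}^d`.
-/

def PreservesSemiconjBy [Mul 𝔸] (g : 𝔸 → 𝔸) : Prop :=
  ∀ ⦃x a b : 𝔸⦄, SemiconjBy x a b → SemiconjBy x (g a) (g b)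

namespace PreservesSemiconjBy

lemma const [Mul 𝔸] {z : 𝔸} (hz : z ∈ Set.center 𝔸) : PreservesSemiconjBy fun _ : 𝔸 => z :=
  fun x _ _ _ => ((Set.mem_center_iff.mp hz).comm x).symm

lemma smul [Mul 𝔸] {R : Type*} [SMul R 𝔸] [SMulCommClass R 𝔸 𝔸] [IsScalarTower R 𝔸 𝔸] (k : R) :
    PreservesSemiconjBy fun x : 𝔸 => k • x :=
  fun _ _ _ h => h.smul_right k

lemma exp [NormedRing 𝔸] [NormedAlgebra ℝ 𝔸] [CompleteSpace 𝔸] :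
    PreservesSemiconjBy (NormedSpace.exp : 𝔸 → 𝔸) :=
  letI : NormedAlgebra ℚ 𝔸 := NormedAlgebra.restrictScalars ℚ ℝ 𝔸
  fun _ _ _ h => h.exp_right

end PreservesSemiconjBy

lemma cPart_zero_add_cPart_one [Ring 𝔸] [Algebra ℝ 𝔸] (B A : 𝔸) :
    cPart B 0 A + cPart B 1 A = A := by
  simp only [cPart, Fin.val_zero, Fin.val_one, pow_zero, pow_one, one_mul, neg_one_mul]
  module

lemma mul_inverse_mul_mul [MonoidWithZero 𝔸] {B : 𝔸} (hU : IsUnit B) (A : 𝔸) :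
    B * (Ring.inverse B * A * B) = A * B := by
  rw [← mul_assoc, ← mul_assoc, Ring.mul_inverse_cancel B hU, one_mul]

section SquareScalar

variable [Ring 𝔸] [Algebra ℝ 𝔸] {B : 𝔸} {c : ℝ}

-- `B² = c` forces `c B⁻¹ = B`, so conjugating by `B` is an involution.
lemma inverse_mul_mul_mul_self (hU : IsUnit B) (hB : B ^ 2 = c • 1) (A : 𝔸) :
    Ring.inverse B * A * B * B = B * A := by
  have hB' : c • Ring.inverse B = B := by
    rw [← one_mul (Ring.inverse B), ← smul_mul_assoc, ← hB, sq, mul_assoc,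
      Ring.mul_inverse_cancel B hU, mul_one]
  rw [mul_assoc _ B B, ← sq, hB, mul_smul_comm, mul_one, ← smul_mul_assoc, hB']

lemma commute_cPart_zero (hU : IsUnit B) (hB : B ^ 2 = c • 1) (A : 𝔸) :
    Commute B (cPart B 0 A) := by
  simp only [cPart, Fin.val_zero, pow_zero, one_mul]
  simp only [Commute, SemiconjBy, mul_smul_comm, smul_mul_assoc, mul_add, add_mul,
    mul_inverse_mul_mul hU, inverse_mul_mul_mul_self hU hB]
  rw [add_comm]

lemma semiconjBy_cPart_one (hU : IsUnit B) (hB : B ^ 2 = c • 1) (A : 𝔸) :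
    SemiconjBy (cPart B 1 A) B (-B) := by
  simp only [cPart, Fin.val_one, pow_one, neg_one_mul]
  simp only [SemiconjBy, mul_smul_comm, smul_mul_assoc, add_mul, mul_add, neg_mul, mul_neg,
    mul_inverse_mul_mul hU, inverse_mul_mul_mul_self hU hB]
  rw [neg_neg, add_comm]

lemma mul_eq_cPart_mul_add_cPart_mul (hU : IsUnit B) (hB : B ^ 2 = c • 1) {g : 𝔸 → 𝔸}
    (hg : PreservesSemiconjBy g) (A : 𝔸) :
    g (-B) * A = cPart B 0 A * g (-B) + cPart B 1 A * g B := by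
  have hC := hg (commute_cPart_zero hU hB A).neg_left.symm
  have hD := hg (semiconjBy_cPart_one hU hB A)
  rw [hC.eq, hD.eq, ← mul_add, cPart_zero_add_cPart_one]

end SquareScalar

lemma cBwd_cons [Ring 𝔸] [Algebra ℝ 𝔸] (p : 𝔸 × Fin 2) (L : List (𝔸 × Fin 2)) (A : 𝔸) :
    cBwd (p :: L) A = cPart p.1 p.2 (cBwd L A) :=
  rfl

lemma sum_fin_succ_pi {M : Type*} [AddCommMonoid M] {n : ℕ} {α : Type*} [Fintype α]
    (F : (Fin (n + 1) → α) → M) :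
    ∑ j, F j = ∑ s, ∑ j : Fin n → α, F (Fin.cons s j) := by
  rw [← Fintype.sum_prod_type']
  exact (Fintype.sum_equiv (Fin.consEquiv fun _ => α) _ _ fun _ => rfl).symm

theorem prod_mul_eq_sum_cBwd [Ring 𝔸] [Algebra ℝ 𝔸] {d : ℕ} (f : Fin d → 𝔸) (c : Fin d → ℝ)
    (hU : ∀ l, IsUnit (f l)) (hf : ∀ l, f l ^ 2 = c l • (1 : 𝔸)) (g : Fin d → 𝔸 → 𝔸)
    (hg : ∀ l, PreservesSemiconjBy (g l)) (A : 𝔸) :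
    ((List.ofFn (fun l => g l (-(f l)))).prod) * A =
      ∑ j : Fin d → Fin 2,
        cBwd (List.ofFn (fun l => (f l, j l))) A *
          ((List.ofFn (fun l => g l (-((-1 : ℝ) ^ ((j l : ℕ)) • f l)))).prod) := by
  induction d generalizing A with
  | zero => simp [cBwd]
  | succ n ih =>
    have ih' := ih (fun l => f l.succ) (fun l => c l.succ) (fun l => hU l.succ)
      (fun l => hf l.succ) (fun l => g l.succ) (fun l => hg l.succ)
    rw [sum_fin_succ_pi, Fin.sum_univ_two]
    simp only [List.ofFn_succ, List.prod_cons, Fin.cons_zero, Fin.cons_succ, mul_assoc, ih',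
      Finset.mul_sum, ← Finset.sum_add_distrib]
    refine Finset.sum_congr rfl fun j _ => ?_
    simp only [cBwd_cons, Fin.val_zero, Fin.val_one, pow_zero, pow_one, one_smul, neg_smul,
      neg_neg]
    rw [← mul_assoc, mul_eq_cPart_mul_add_cPart_mul (hU 0) (hf 0) (hg 0), add_mul, mul_assoc,
      mul_assoc]

theorem prod_gtt_mul_eq_sum_cBwd_general [NormedRing 𝔸] [NormedAlgebra ℝ 𝔸] [CompleteSpace 𝔸]
    {d : ℕ} (f : Fin d → 𝔸) (r : Fin d → ℝ)
    (hU : ∀ l, IsUnit (f l)) (hf : ∀ l, f l ^ 2 = -(r l ^ 2) • (1 : 𝔸))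
    (g : Fin d → 𝔸 → 𝔸)
    (hg : ∀ l, g l = NormedSpace.exp ∨
               g l = (fun _ => Real.cos (r l) • (1 : 𝔸)) ∨
               g l = (fun x => (Real.sin (r l) / r l) • x) ∨
               g l = (fun _ => (0 : 𝔸)))
    (A : 𝔸) :
    ((List.ofFn (fun l => g l (-(f l)))).prod) * A =
      ∑ j : Fin d → Fin 2,
        cBwd (List.ofFn (fun l => (f l, j l))) A *
          ((List.ofFn (fun l => g l (-((-1 : ℝ) ^ ((j l : ℕ)) • f l)))).prod) := by
  refine prod_mul_eq_sum_cBwd f _ hU hf g (fun l => ?_) A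
  rcases hg l with h | h | h | h <;> rw [h]
  · exact .exp
  · exact .const (Set.smul_mem_center _ Set.one_mem_center)
  · exact .smul _
  · exact .const Set.zero_mem_center

/-- A product of "trigonometric" partial exponentials `g_l(−f_l)` — each `g_l` being `exp`, the
constant `cos(r_l)·1`, `x ↦ (sin(r_l)/r_l)·x`, or `0` — can be moved past a multivector `A` at
the cost of sign flips on the decomposed parts. -/
theorem prod_gtt_mul_eq_sum_cBwd [NormedRing 𝔸] [NormedAlgebra ℝ 𝔸] [CompleteSpace 𝔸]
    {d : ℕ} (f : Fin d → 𝔸) (r : Fin d → ℝ) (hr : ∀ l, 0 < r l)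
    (hU : ∀ l, IsUnit (f l)) (hf : ∀ l, f l ^ 2 = -(r l ^ 2) • (1 : 𝔸))
    (g : Fin d → 𝔸 → 𝔸)
    (hg : ∀ l, g l = NormedSpace.exp ∨
               g l = (fun _ => Real.cos (r l) • (1 : 𝔸)) ∨
               g l = (fun x => (Real.sin (r l) / r l) • x) ∨
               g l = (fun _ => (0 : 𝔸)))
    (A : 𝔸) :
    ((List.ofFn (fun l => g l (-(f l)))).prod) * A =
      ∑ j : Fin d → Fin 2,
        cBwd (List.ofFn (fun l => (f l, j l))) A *
          ((List.ofFn (fun l => g l (-((-1 : ℝ) ^ ((j l : ℕ)) • f l)))).prod) :=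
  prod_gtt_mul_eq_sum_cBwd_general f r hU hf g hg A
end
end
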